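/- arXiv:1902.02509 — 2 statements merged into one kernel-verified Lean document; each statement's English description precedes it below -/
import Mathlib

section
/- Let Z ∈ R^{n×q} with singular values γ_1, …, γ_{n∧q}, and σ_min > 0. Then min over positive semidefinite S ⪰ σ_min·Id_n of (1/2)Tr(Zᵀ S⁻¹ Z) + (1/2)Tr(S) equals (1/2)∑_{i=1}^{n∧q} γ_i²/(γ_i ∨ σ_min) + (1/2)∑_{i=1}^{n∧q} (γ_i ∨ σ_min) + (1/2)(n − n∧q)σ_min, and the minimum is attained at S = SpCl((ZZᵀ)^{1/2}, σ_min) where SpCl clips the eigenvalues of the square root of ZZᵀ below at σ_min. -/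
/-!
Let `U` be an orthonormal eigenbasis of `Z * Zᵀ` and `M = Uᵀ * S * U`. Then
`Tr(Zᵀ S⁻¹ Z) + Tr S = ∑ᵢ (γᵢ² (M⁻¹)ᵢᵢ + Mᵢᵢ)`. If `S ⪰ σ • 1` then `Mᵢᵢ ≥ σ`, and for positive
definite `M` one has `(M⁻¹)ᵢᵢ ≥ (Mᵢᵢ)⁻¹`, so each summand is at least `γᵢ²/m + m` with `m ≥ σ`,
which is minimised at `m = γᵢ ∨ σ`. The clipped square root has `M = diagonal (γᵢ ∨ σ)` and
attains all these bounds at once.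
-/

open Matrix

/-- Singular values of a real `n × q` matrix (padded with zeros to length `n`):
square roots of the eigenvalues of `Z * Zᵀ`. -/
noncomputable def singVal {n q : ℕ} (Z : Matrix (Fin n) (Fin q) ℝ) (i : Fin n) : ℝ :=
  Real.sqrt ((Matrix.isHermitian_mul_conjTranspose_self Z).eigenvalues i)

/-- The clipped square root of `Z * Zᵀ`: same eigenvectors, eigenvalues `γ_i ∨ σ`. -/
noncomputable def spCl {n q : ℕ} (Z : Matrix (Fin n) (Fin q) ℝ) (σ : ℝ) :
    Matrix (Fin n) (Fin n) ℝ :=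
  ((Matrix.isHermitian_mul_conjTranspose_self Z).eigenvectorUnitary :
      Matrix (Fin n) (Fin n) ℝ)
    * Matrix.diagonal (fun i => max (singVal Z i) σ)
    * star ((Matrix.isHermitian_mul_conjTranspose_self Z).eigenvectorUnitary :
      Matrix (Fin n) (Fin n) ℝ)

lemma sq_div_max_add_max_le {γ σ m : ℝ} (hγ : 0 ≤ γ) (hσ : 0 < σ) (hm : σ ≤ m) :
    γ ^ 2 / max γ σ + max γ σ ≤ γ ^ 2 / m + m := by
  have hm0 : 0 < m := hσ.trans_le hm
  rcases le_total γ σ with h | h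
  · rw [max_eq_right h, div_add' _ _ _ hσ.ne', div_add' _ _ _ hm0.ne', div_le_div_iff₀ hσ hm0]
    nlinarith [mul_le_mul h h hγ hσ.le, mul_le_mul_of_nonneg_right hm hσ.le]
  · have hγ0 : 0 < γ := hσ.trans_le h
    rw [max_eq_left h, div_add' _ _ _ hγ0.ne', div_add' _ _ _ hm0.ne', div_le_div_iff₀ hγ0 hm0]
    nlinarith [mul_nonneg hγ (sq_nonneg (m - γ))]

namespace Matrix

variable {ι : Type*} [DecidableEq ι]

theorem PosSemidef.le_apply_self_of_sub_smul_one {M : Matrix ι ι ℝ} {σ : ℝ}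
    (h : (M - σ • 1).PosSemidef) (i : ι) : σ ≤ M i i := by
  simpa using h.diag_nonneg (i := i)

theorem PosSemidef.posDef_of_sub_smul_one {M : Matrix ι ι ℝ} {σ : ℝ} (hσ : 0 < σ)
    (h : (M - σ • 1).PosSemidef) : M.PosDef := by
  simpa using (PosDef.one.smul hσ).add_posSemidef h

variable [Fintype ι]

theorem PosDef.inv_apply_self_le_apply_self_inv {M : Matrix ι ι ℝ} (hM : M.PosDef) (i : ι) :
    (M i i)⁻¹ ≤ M⁻¹ i i := by
  set e : ι → ℝ := Pi.single i 1
  have hMt : Mᵀ = M := hM.isHermitian.eq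
  have hMe : e ᵥ* M = M *ᵥ e := by rw [← mulVec_transpose, hMt]
  have hinv : M * M⁻¹ = 1 := mul_nonsing_inv M ((isUnit_iff_isUnit_det M).mp hM.isUnit)
  have hpos : 0 < M i i := hM.diag_pos
  -- the quadratic form of `M` at this vector equals `M⁻¹ i i - (M i i)⁻¹`
  have key := hM.posSemidef.dotProduct_mulVec_nonneg ((M i i)⁻¹ • e - M⁻¹ *ᵥ e)
  have hcross : (M⁻¹ *ᵥ e) ⬝ᵥ (M *ᵥ e) = 1 := by
    rw [dotProduct_comm, dotProduct_mulVec, ← hMe, vecMul_vecMul, hinv, vecMul_one]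
    simp [e]
  simp only [star_trivial, mulVec_sub, mulVec_smul, mulVec_mulVec, hinv, one_mulVec,
    sub_dotProduct, dotProduct_sub, smul_dotProduct, dotProduct_smul, hcross] at key
  simpa [e, inv_mul_cancel₀ hpos.ne'] using key

section UnitaryConj

variable {R : Type*} [CommRing R] [StarRing R] (U : unitary (Matrix ι ι R))

theorem inv_star_mul_mul_unitary (S : Matrix ι ι R) :
    (star (U : Matrix ι ι R) * S * U)⁻¹ = star (U : Matrix ι ι R) * S⁻¹ * U := by
  rw [mul_inv_rev, mul_inv_rev, inv_eq_left_inv (Unitary.star_mul_self_of_mem U.2),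
    inv_eq_left_inv (Unitary.mul_star_self_of_mem U.2), mul_assoc]

theorem trace_star_mul_mul_unitary (S : Matrix ι ι R) :
    (star (U : Matrix ι ι R) * S * U).trace = S.trace := by
  rw [trace_mul_cycle, Unitary.mul_star_self_of_mem U.2, one_mul]

theorem star_mul_sub_smul_one_mul_unitary (S : Matrix ι ι R) (c : R) :
    star (U : Matrix ι ι R) * (S - c • 1) * U = star (U : Matrix ι ι R) * S * U - c • 1 := by
  rw [mul_sub, sub_mul, Matrix.mul_smul, mul_one, Matrix.smul_mul,
    Unitary.star_mul_self_of_mem U.2]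

end UnitaryConj

theorem IsHermitian.trace_inv_mul_eq_sum {A : Matrix ι ι ℝ} (hA : A.IsHermitian)
    (S : Matrix ι ι ℝ) :
    (S⁻¹ * A).trace = ∑ i, hA.eigenvalues i *
      (star (hA.eigenvectorUnitary : Matrix ι ι ℝ) * S * hA.eigenvectorUnitary)⁻¹ i i := by
  conv_lhs => rw [hA.spectral_theorem, Unitary.conjStarAlgAut_apply, ← mul_assoc,
    trace_mul_cycle, ← mul_assoc, ← inv_star_mul_mul_unitary]
  simp [trace, mul_diagonal, mul_comm]

end Matrix

section ClippedSquareRoot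

variable {n q : ℕ} (Z : Matrix (Fin n) (Fin q) ℝ)

noncomputable def inEigenbasis (S : Matrix (Fin n) (Fin n) ℝ) : Matrix (Fin n) (Fin n) ℝ :=
  star ((isHermitian_mul_conjTranspose_self Z).eigenvectorUnitary : Matrix (Fin n) (Fin n) ℝ) *
    S * (isHermitian_mul_conjTranspose_self Z).eigenvectorUnitary

theorem objective_eq_sum (S : Matrix (Fin n) (Fin n) ℝ) :
    (Zᵀ * S⁻¹ * Z).trace + S.trace =
      ∑ i, (singVal Z i ^ 2 * (inEigenbasis Z S)⁻¹ i i + inEigenbasis Z S i i) := by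
  have hZZ := isHermitian_mul_conjTranspose_self Z
  rw [trace_mul_cycle, trace_mul_comm, ← conjTranspose_eq_transpose_of_trivial,
    hZZ.trace_inv_mul_eq_sum, ← trace_star_mul_mul_unitary hZZ.eigenvectorUnitary S, trace,
    ← Finset.sum_add_distrib]
  refine Finset.sum_congr rfl fun i _ => ?_
  rw [singVal, Real.sq_sqrt (eigenvalues_self_mul_conjTranspose_nonneg Z i)]
  rfl

theorem inEigenbasis_spCl (σ : ℝ) :
    inEigenbasis Z (spCl Z σ) = diagonal (fun i => max (singVal Z i) σ) := by
  have hU := Unitary.star_mul_self_of_mem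
    (isHermitian_mul_conjTranspose_self Z).eigenvectorUnitary.2
  simp only [inEigenbasis, spCl, ← mul_assoc, hU, one_mul]
  rw [mul_assoc, hU, mul_one]

theorem objective_spCl {σ : ℝ} (hσ : 0 < σ) :
    (Zᵀ * (spCl Z σ)⁻¹ * Z).trace + (spCl Z σ).trace =
      ∑ i, (singVal Z i ^ 2 / max (singVal Z i) σ + max (singVal Z i) σ) := by
  have hinv : (inEigenbasis Z (spCl Z σ))⁻¹ = diagonal fun i => (max (singVal Z i) σ)⁻¹ := by
    refine inv_eq_left_inv ?_
    rw [inEigenbasis_spCl, diagonal_mul_diagonal, ← diagonal_one]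
    exact congrArg diagonal (funext fun i => inv_mul_cancel₀ (lt_max_of_lt_right hσ).ne')
  rw [objective_eq_sum, hinv, inEigenbasis_spCl]
  simp [div_eq_mul_inv]

theorem isHermitian_spCl (σ : ℝ) : (spCl Z σ).IsHermitian := by
  have h := isHermitian_mul_mul_conjTranspose
    ((isHermitian_mul_conjTranspose_self Z).eigenvectorUnitary : Matrix (Fin n) (Fin n) ℝ)
    (isHermitian_diagonal fun i => max (singVal Z i) σ)
  rwa [← star_eq_conjTranspose] at h

theorem posSemidef_spCl_sub_smul_one (σ : ℝ) : (spCl Z σ - σ • 1).PosSemidef := by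
  set U := (isHermitian_mul_conjTranspose_self Z).eigenvectorUnitary
  set D : Matrix (Fin n) (Fin n) ℝ := diagonal fun i => max (singVal Z i) σ
  have hD : (D - σ • 1).PosSemidef := by
    rw [smul_one_eq_diagonal, diagonal_sub, posSemidef_diagonal_iff]
    exact fun i => sub_nonneg.2 (le_max_right _ _)
  have h := star_mul_sub_smul_one_mul_unitary (star U) D σ
  rw [Unitary.coe_star, star_star] at h
  rw [spCl, ← h, star_eq_conjTranspose]
  exact hD.mul_mul_conjTranspose_same _

theorem sum_le_objective {σ : ℝ} (hσ : 0 < σ) {S : Matrix (Fin n) (Fin n) ℝ}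
    (hS : (S - σ • 1).PosSemidef) :
    ∑ i, (singVal Z i ^ 2 / max (singVal Z i) σ + max (singVal Z i) σ) ≤
      (Zᵀ * S⁻¹ * Z).trace + S.trace := by
  have hM : (inEigenbasis Z S - σ • 1).PosSemidef := by
    rw [inEigenbasis, ← star_mul_sub_smul_one_mul_unitary, star_eq_conjTranspose]
    exact hS.conjTranspose_mul_mul_same _
  rw [objective_eq_sum]
  refine Finset.sum_le_sum fun i _ => ?_
  have hσM := hM.le_apply_self_of_sub_smul_one i
  calc _ ≤ singVal Z i ^ 2 / inEigenbasis Z S i i + inEigenbasis Z S i i :=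
        sq_div_max_add_max_le (Real.sqrt_nonneg _) hσ hσM
    _ ≤ _ := by
        rw [div_eq_mul_inv]
        gcongr
        exact (hM.posDef_of_sub_smul_one hσ).inv_apply_self_le_apply_self_inv i

end ClippedSquareRoot

/-- For `Z ∈ ℝ^{n×q}` with singular values `γ_i` and `σ_min > 0`, the minimum over
`S ⪰ σ_min·Id` of `(1/2)Tr(Zᵀ S⁻¹ Z) + (1/2)Tr(S)` equals
`(1/2)∑ γ_i²/(γ_i ∨ σ_min) + (1/2)∑ (γ_i ∨ σ_min)` (over the `n` padded singular
values, which accounts for the extra `(1/2)(n − n∧q)σ_min` term), attained at the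
clipped square root of `ZZᵀ`. -/
theorem stmt6 {n q : ℕ} (Z : Matrix (Fin n) (Fin q) ℝ) (σmin : ℝ) (hσ : 0 < σmin) :
    (∀ S : Matrix (Fin n) (Fin n) ℝ, S.IsHermitian →
        (S - σmin • (1 : Matrix (Fin n) (Fin n) ℝ)).PosSemidef →
        (1 / 2) * (Zᵀ * (spCl Z σmin)⁻¹ * Z).trace + (1 / 2) * (spCl Z σmin).trace
          ≤ (1 / 2) * (Zᵀ * S⁻¹ * Z).trace + (1 / 2) * S.trace)
      ∧ (spCl Z σmin).IsHermitian
      ∧ (spCl Z σmin - σmin • (1 : Matrix (Fin n) (Fin n) ℝ)).PosSemidef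
      ∧ (1 / 2) * (Zᵀ * (spCl Z σmin)⁻¹ * Z).trace + (1 / 2) * (spCl Z σmin).trace
          = (1 / 2) * ∑ i, (singVal Z i) ^ 2 / max (singVal Z i) σmin
            + (1 / 2) * ∑ i, max (singVal Z i) σmin := by
  have hmin := objective_spCl Z hσ
  rw [Finset.sum_add_distrib] at hmin
  refine ⟨fun S _ hS => ?_, isHermitian_spCl Z σmin, posSemidef_spCl_sub_smul_one Z σmin, ?_⟩
  · have hlow := sum_le_objective Z hσ hS
    rw [Finset.sum_add_distrib] at hlow
    linarith
  · linarith
end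

section
/- Let Z ∈ R^{n×q} with singular values γ_1, …, γ_{n∧q}, σ > 0, and let ω_σ(Z) = (1/2σ)‖Z‖_F² + (n/2)σ. Then the inf-convolution of the nuclear norm with ω_σ satisfies (‖·‖_{S,1} □ ω_σ)(Z) = min over S ⪰ σ·Id_n of (1/2)Tr(Zᵀ S⁻¹ Z) + (1/2)Tr(S). -/
/-!
Everything rests on the block-matrix description of the nuclear norm:
`[[A, W], [Wᴴ, B]] ⪰ 0` implies `2‖W‖_* ≤ tr A + tr B` (conjugate the block by `(U, -V)`,
where `U` diagonalises `W Wᴴ` and `V` is the partial isometry of the polar decomposition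
of `W`), with near-equality for `A ≈ (W Wᴴ)^(1/2)`, `B = Wᴴ A⁻¹ W`.

Given `S ⪰ σ I`, put `K = S⁻¹ Z` and `W = (S - σ I) K = Z - σ K`. The block
`[[S - σ I, W], [Wᴴ, Kᴴ (S - σ I) K]]` is positive, and its bound on `‖W‖_*` is exactly
`½ tr (Zᴴ S⁻¹ Z) + ½ tr S - ω_σ(Z - W)`.

Given `W`, put `S = A + σ I`. The blocks `[[A, W], [Wᴴ, Wᴴ A⁻¹ W]]` and
`[[σ I, Z - W], [(Z - W)ᴴ, σ⁻¹ (Z - W)ᴴ (Z - W)]]` have zero Schur complement, so their sum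
`[[S, Z], [Zᴴ, ·]]` is positive and `tr (Zᴴ S⁻¹ Z)` is at most the trace of its lower-right
block, which gives `½ tr (Zᴴ S⁻¹ Z) + ½ tr S ≤ ‖W‖_* + ω_σ(Z - W) + δ`.
-/

open Matrix

/-- Nuclear norm (Schatten 1-norm): sum of the singular values. -/
noncomputable def nucNorm {n q : ℕ} (Z : Matrix (Fin n) (Fin q) ℝ) : ℝ :=
  ∑ i, singVal Z i

/-- Frobenius norm of a matrix. -/
noncomputable def frobNorm {n q : ℕ} (A : Matrix (Fin n) (Fin q) ℝ) : ℝ :=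
  Real.sqrt (∑ i, ∑ j, (A i j) ^ 2)

open scoped ComplexOrder

namespace Matrix

variable {m k r : Type*} [Fintype m] [Fintype k] [Fintype r] {𝕜 : Type*} [RCLike 𝕜]

theorem trace_conjStarAlgAut {R : Type*} [CommRing R] [StarRing R] [DecidableEq m]
    (u : unitaryGroup m R) (x : Matrix m m R) :
    (Unitary.conjStarAlgAut R _ u x).trace = x.trace := by
  rw [Unitary.conjStarAlgAut_apply, trace_mul_cycle, Unitary.coe_star_mul_self, one_mul]

namespace PosSemidef

theorem fromBlocks_mul {R : Type*} [CommRing R] [PartialOrder R] [StarRing R] [DecidableEq m]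
    {A : Matrix m m R} (hA : A.PosSemidef) (K : Matrix m k R) :
    (fromBlocks A (A * K) (A * K)ᴴ (Kᴴ * A * K)).PosSemidef := by
  have h := hA.conjTranspose_mul_mul_same (fromCols (1 : Matrix m m R) K)
  rw [conjTranspose_fromCols_eq_fromRows_conjTranspose, fromRows_mul,
    fromRows_mul_fromCols] at h
  simpa [hA.1.eq] using h

theorem two_mul_trace_offDiag_le {A : Matrix m m ℝ} {W : Matrix m k ℝ} {B : Matrix k k ℝ}
    (h : (fromBlocks A W Wᴴ B).PosSemidef) (X : Matrix m r ℝ) (Y : Matrix k r ℝ) :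
    2 * (Xᴴ * W * Y).trace ≤ (Xᴴ * A * X).trace + (Yᴴ * B * Y).trace := by
  have hconj := (h.conjTranspose_mul_mul_same (fromRows X (-Y))).trace_nonneg
  have hsym : (Yᴴ * Wᴴ * X).trace = (Xᴴ * W * Y).trace := by
    simpa [Matrix.mul_assoc] using trace_conjTranspose (Xᴴ * W * Y)
  rw [conjTranspose_fromRows_eq_fromCols_conjTranspose, fromCols_mul_fromBlocks,
    fromCols_mul_fromRows] at hconj
  simp only [conjTranspose_neg, Matrix.neg_mul, Matrix.mul_neg, Matrix.add_mul, trace_add,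
    trace_neg] at hconj
  linarith

theorem trace_conjTranspose_mul_mul_le {B : Matrix k k 𝕜} (hB : B.PosSemidef)
    {V : Matrix k m 𝕜} (hV : V * Vᴴ * V = V) : (Vᴴ * B * V).trace ≤ B.trace := by
  classical
  set Q : Matrix k k 𝕜 := 1 - V * Vᴴ
  have hQ : Qᴴ = Q := by simp [Q]
  have hQQ : Q * Q = Q := by
    simp only [Q, Matrix.mul_sub, Matrix.sub_mul, Matrix.mul_one, Matrix.one_mul]
    rw [← Matrix.mul_assoc, hV]; abel
  have hcompl : (Q * B * Qᴴ).trace = B.trace - (Vᴴ * B * V).trace := by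
    rw [hQ, trace_mul_cycle, hQQ, Matrix.sub_mul, Matrix.one_mul, trace_sub, trace_mul_cycle Vᴴ]
  simpa [hcompl] using (hB.mul_mul_conjTranspose_same Q).trace_nonneg

end PosSemidef

namespace PosDef

variable [DecidableEq m]

theorem fromBlocks_conjTranspose_mul_inv_mul {A : Matrix m m 𝕜} (hA : A.PosDef)
    (B : Matrix m k 𝕜) : (fromBlocks A B Bᴴ (Bᴴ * A⁻¹ * B)).PosSemidef := by
  have := hA.isUnit.invertible
  rw [fromBlocks₁₁ B _ hA, sub_self]
  exact .zero

theorem trace_conjTranspose_mul_inv_mul_le {S : Matrix m m 𝕜} (hS : S.PosDef)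
    {Z : Matrix m k 𝕜} {D : Matrix k k 𝕜} (h : (fromBlocks S Z Zᴴ D).PosSemidef) :
    (Zᴴ * S⁻¹ * Z).trace ≤ D.trace := by
  have := hS.isUnit.invertible
  rw [fromBlocks₁₁ Z D hS] at h
  simpa [trace_sub] using h.trace_nonneg

end PosDef

end Matrix

theorem frobNorm_sq {n q : ℕ} (A : Matrix (Fin n) (Fin q) ℝ) :
    frobNorm A ^ 2 = (Aᴴ * A).trace := by
  rw [frobNorm, Real.sq_sqrt (by positivity), trace, Finset.sum_comm]
  simp [mul_apply, sq]

section SingularValues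

variable {n q : ℕ} (W : Matrix (Fin n) (Fin q) ℝ)

theorem singVal_nonneg (i : Fin n) : 0 ≤ singVal W i :=
  Real.sqrt_nonneg _

theorem sq_singVal (i : Fin n) :
    singVal W i ^ 2 = (isHermitian_mul_conjTranspose_self W).eigenvalues i :=
  Real.sq_sqrt (eigenvalues_self_mul_conjTranspose_nonneg W i)

noncomputable abbrev leftSingularUnitary : unitaryGroup (Fin n) ℝ :=
  (isHermitian_mul_conjTranspose_self W).eigenvectorUnitary

theorem conj_star_leftSingularUnitary :
    Unitary.conjStarAlgAut ℝ _ (star (leftSingularUnitary W)) (W * Wᴴ) =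
      diagonal fun i => singVal W i ^ 2 := by
  rw [IsHermitian.conjStarAlgAut_star_eigenvectorUnitary]
  congr 1
  funext i
  simp [sq_singVal]

theorem conjTranspose_leftSingularUnitary_mul_mul :
    (leftSingularUnitary W : Matrix (Fin n) (Fin n) ℝ)ᴴ * (W * Wᴴ) *
      (leftSingularUnitary W : Matrix (Fin n) (Fin n) ℝ) = diagonal fun i => singVal W i ^ 2 := by
  simpa only [Unitary.conjStarAlgAut_apply, Unitary.coe_star, star_star, star_eq_conjTranspose,
      conjTranspose_conjTranspose]
    using conj_star_leftSingularUnitary W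

theorem mul_conjTranspose_self_eq_conj :
    W * Wᴴ = Unitary.conjStarAlgAut ℝ _ (leftSingularUnitary W)
      (diagonal fun i => singVal W i ^ 2) := by
  rw [← conj_star_leftSingularUnitary, ← Unitary.conjStarAlgAut_mul_apply,
    Unitary.mul_star_self, map_one, StarAlgEquiv.one_apply]

/-- Since `0⁻¹ = 0`, this is `Wᴴ U Γ⁺` with `Γ⁺` the pseudo-inverse of the singular
values: the partial isometry of the polar decomposition `W = U Γ Vᴴ`. -/
noncomputable def polarFactor : Matrix (Fin q) (Fin n) ℝ :=
  Wᴴ * (leftSingularUnitary W : Matrix (Fin n) (Fin n) ℝ) * diagonal fun i => (singVal W i)⁻¹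

theorem conjTranspose_leftSingularUnitary_mul_polarFactor :
    (leftSingularUnitary W : Matrix (Fin n) (Fin n) ℝ)ᴴ * W * polarFactor W =
      diagonal (singVal W) := by
  calc _ = (leftSingularUnitary W : Matrix (Fin n) (Fin n) ℝ)ᴴ * (W * Wᴴ) *
        (leftSingularUnitary W : Matrix (Fin n) (Fin n) ℝ) *
          diagonal fun i => (singVal W i)⁻¹ := by
        simp only [polarFactor, Matrix.mul_assoc]
    _ = diagonal (singVal W) := by
        rw [conjTranspose_leftSingularUnitary_mul_mul, diagonal_mul_diagonal]
        congr 1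
        funext i
        rcases eq_or_ne (singVal W i) 0 with h0 | h0
        · simp [h0]
        · field_simp

theorem polarFactor_mul_conjTranspose_mul_self :
    polarFactor W * (polarFactor W)ᴴ * polarFactor W = polarFactor W := by
  have hVV : (polarFactor W)ᴴ * polarFactor W =
      diagonal fun i => (singVal W i)⁻¹ * singVal W i ^ 2 * (singVal W i)⁻¹ := by
    rw [← diagonal_mul_diagonal, ← diagonal_mul_diagonal,
      ← conjTranspose_leftSingularUnitary_mul_mul]
    simp only [polarFactor, conjTranspose_mul, conjTranspose_conjTranspose,
      diagonal_conjTranspose, star_trivial, Matrix.mul_assoc]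
  rw [Matrix.mul_assoc, hVV, polarFactor, Matrix.mul_assoc, diagonal_mul_diagonal]
  congr 3
  funext i
  rcases eq_or_ne (singVal W i) 0 with h0 | h0
  · simp [h0]
  · field_simp

theorem nucNorm_eq_trace_conjTranspose_mul_polarFactor :
    nucNorm W =
      ((leftSingularUnitary W : Matrix (Fin n) (Fin n) ℝ)ᴴ * W * polarFactor W).trace := by
  rw [conjTranspose_leftSingularUnitary_mul_polarFactor, trace_diagonal, nucNorm]

end SingularValues

theorem two_mul_nucNorm_le_of_posSemidef {n q : ℕ} {W : Matrix (Fin n) (Fin q) ℝ}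
    {A : Matrix (Fin n) (Fin n) ℝ} {B : Matrix (Fin q) (Fin q) ℝ}
    (h : (fromBlocks A W Wᴴ B).PosSemidef) : 2 * nucNorm W ≤ A.trace + B.trace := by
  have hB : B.PosSemidef := h.submatrix Sum.inr
  have hA := trace_conjStarAlgAut (star (leftSingularUnitary W)) A
  rw [Unitary.conjStarAlgAut_apply, Unitary.coe_star, star_star, star_eq_conjTranspose] at hA
  have hUV := h.two_mul_trace_offDiag_le (leftSingularUnitary W : Matrix (Fin n) (Fin n) ℝ)
    (polarFactor W)
  have hV := hB.trace_conjTranspose_mul_mul_le (polarFactor_mul_conjTranspose_mul_self W)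
  rw [nucNorm_eq_trace_conjTranspose_mul_polarFactor]
  linarith

theorem exists_posDef_trace_le_nucNorm_add {n q : ℕ} (W : Matrix (Fin n) (Fin q) ℝ) {δ : ℝ}
    (hδ : 0 < δ) :
    ∃ A : Matrix (Fin n) (Fin n) ℝ, A.PosDef ∧ A.trace ≤ nucNorm W + δ ∧
      (Wᴴ * A⁻¹ * W).trace ≤ nucNorm W := by
  -- `A` is `(W Wᴴ)^(1/2)` with its eigenvalues raised to at least `ε`, to make it invertible.
  set ε := δ / (n + 1)
  have hε : 0 < ε := by positivity
  set d : Fin n → ℝ := fun i => max (singVal W i) ε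
  have hd : ∀ i, 0 < d i := fun i => hε.trans_le (le_max_right _ _)
  set conj := Unitary.conjStarAlgAut ℝ (Matrix (Fin n) (Fin n) ℝ) (leftSingularUnitary W)
  have hinv : (conj (diagonal d))⁻¹ = conj (diagonal d⁻¹) := by
    refine inv_eq_right_inv ?_
    rw [← map_mul, diagonal_mul_diagonal]
    simp [(hd _).ne']
  refine ⟨conj (diagonal d), ?_, ?_, ?_⟩
  · rw [Unitary.conjStarAlgAut_apply,
      IsUnit.posDef_star_right_conjugate_iff (Unitary.isUnit_coe)]
    exact posDef_diagonal_iff.2 hd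
  · have hnε : n * ε ≤ δ := by
      rw [mul_div_assoc', div_le_iff₀ (by positivity)]
      nlinarith
    calc (conj (diagonal d)).trace = ∑ i, d i := by rw [trace_conjStarAlgAut, trace_diagonal]
      _ ≤ ∑ i, (singVal W i + ε) :=
        Finset.sum_le_sum fun i _ => max_le (by linarith) (by linarith [singVal_nonneg W i])
      _ ≤ nucNorm W + δ := by simp [Finset.sum_add_distrib, nucNorm]; linarith
  · rw [Matrix.mul_assoc, trace_mul_comm, Matrix.mul_assoc, mul_conjTranspose_self_eq_conj, hinv,
      ← map_mul, trace_conjStarAlgAut, diagonal_mul_diagonal, trace_diagonal, nucNorm]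
    refine Finset.sum_le_sum fun i _ => ?_
    rw [Pi.inv_apply, inv_mul_eq_div, div_le_iff₀ (hd i), sq]
    exact mul_le_mul_of_nonneg_left (le_max_left _ _) (singVal_nonneg W i)

theorem exists_nucNorm_add_le_of_sub_posSemidef {n q : ℕ} (Z : Matrix (Fin n) (Fin q) ℝ)
    {σ : ℝ} (hσ : 0 < σ) {S : Matrix (Fin n) (Fin n) ℝ}
    (hSσ : (S - σ • (1 : Matrix (Fin n) (Fin n) ℝ)).PosSemidef) :
    ∃ W : Matrix (Fin n) (Fin q) ℝ,
      nucNorm W + ((1 / (2 * σ)) * frobNorm (Z - W) ^ 2 + (n / 2) * σ)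
        ≤ (1 / 2) * (Zᴴ * S⁻¹ * Z).trace + (1 / 2) * S.trace := by
  have hS : S.PosDef := by simpa using PosDef.posSemidef_add hSσ (PosDef.one.smul hσ)
  have hSS : S * S⁻¹ = 1 := mul_nonsing_inv S ((isUnit_iff_isUnit_det S).mp hS.isUnit)
  set K := S⁻¹ * Z
  refine ⟨(S - σ • 1) * K, ?_⟩
  have hnuc := two_mul_nucNorm_le_of_posSemidef (hSσ.fromBlocks_mul K)
  have hZW : Z - (S - σ • 1) * K = σ • K := by
    rw [Matrix.sub_mul, ← Matrix.mul_assoc, hSS, Matrix.one_mul, smul_mul, Matrix.one_mul,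
      sub_sub_cancel]
  have htrP : (S - σ • (1 : Matrix (Fin n) (Fin n) ℝ)).trace = S.trace - σ * n := by
    simp [trace_sub]
  have htrK :
      (Kᴴ * (S - σ • 1) * K).trace = (Zᴴ * S⁻¹ * Z).trace - σ * (Kᴴ * K).trace := by
    rw [Matrix.mul_sub, Matrix.sub_mul, trace_sub]
    simp only [K, conjTranspose_mul, hS.1.inv.eq]
    rw [Matrix.mul_assoc (Zᴴ * S⁻¹) S, ← Matrix.mul_assoc S, hSS, Matrix.one_mul]
    simp [trace_smul]
  have hfrob : frobNorm (σ • K) ^ 2 = σ ^ 2 * (Kᴴ * K).trace := by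
    rw [frobNorm_sq, conjTranspose_smul, smul_mul, Matrix.mul_smul, trace_smul, trace_smul]
    simp [sq, mul_assoc]
  rw [hZW, hfrob]
  rw [htrP, htrK] at hnuc
  field_simp
  linarith

theorem exists_sub_posSemidef_le_nucNorm_add {n q : ℕ} (Z W : Matrix (Fin n) (Fin q) ℝ)
    {σ δ : ℝ} (hσ : 0 < σ) (hδ : 0 < δ) :
    ∃ S : Matrix (Fin n) (Fin n) ℝ, S.IsHermitian ∧
      (S - σ • (1 : Matrix (Fin n) (Fin n) ℝ)).PosSemidef ∧
      (1 / 2) * (Zᴴ * S⁻¹ * Z).trace + (1 / 2) * S.trace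
        ≤ nucNorm W + ((1 / (2 * σ)) * frobNorm (Z - W) ^ 2 + (n / 2) * σ) + δ := by
  obtain ⟨A, hA, htrA, htrWAW⟩ := exists_posDef_trace_le_nucNorm_add W hδ
  have hσ1 : (σ • (1 : Matrix (Fin n) (Fin n) ℝ)).PosDef := PosDef.one.smul hσ
  have hS := hA.add hσ1
  refine ⟨A + σ • 1, hS.1, by simpa using hA.posSemidef, ?_⟩
  have hblock := (hA.fromBlocks_conjTranspose_mul_inv_mul W).add
    (hσ1.fromBlocks_conjTranspose_mul_inv_mul (Z - W))
  rw [fromBlocks_add, add_sub_cancel, ← conjTranspose_add, add_sub_cancel] at hblock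
  have hschur := hS.trace_conjTranspose_mul_inv_mul_le hblock
  have hσinv : (σ • (1 : Matrix (Fin n) (Fin n) ℝ))⁻¹ = σ⁻¹ • 1 :=
    inv_eq_left_inv (by simp [smul_smul, hσ.ne'])
  rw [trace_add, hσinv] at hschur
  simp only [Matrix.mul_smul, Matrix.smul_mul, Matrix.mul_one, trace_smul, ← frobNorm_sq,
    smul_eq_mul] at hschur
  have htrS : (A + σ • (1 : Matrix (Fin n) (Fin n) ℝ)).trace = A.trace + σ * n := by
    simp [trace_add]
  have hF : 1 / (2 * σ) * frobNorm (Z - W) ^ 2 = 1 / 2 * (σ⁻¹ * frobNorm (Z - W) ^ 2) := by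
    ring
  rw [htrS, hF]
  linarith

/-- For `Z ∈ ℝ^{n×q}`, `σ > 0` and `ω_σ(W) = (1/2σ)‖W‖_F² + (n/2)σ`, the
inf-convolution of the nuclear norm with `ω_σ` equals the minimum over `S ⪰ σ·Id_n` of
`(1/2)Tr(Zᵀ S⁻¹ Z) + (1/2)Tr(S)`. -/
theorem stmt7 {n q : ℕ} (Z : Matrix (Fin n) (Fin q) ℝ) (σ : ℝ) (hσ : 0 < σ) :
    (⨅ W : Matrix (Fin n) (Fin q) ℝ,
        ((nucNorm W + ((1 / (2 * σ)) * frobNorm (Z - W) ^ 2 + (n / 2) * σ) : ℝ) : EReal))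
      = ⨅ S ∈ {S : Matrix (Fin n) (Fin n) ℝ | S.IsHermitian ∧
          (S - σ • (1 : Matrix (Fin n) (Fin n) ℝ)).PosSemidef},
          (((1 / 2) * (Zᵀ * S⁻¹ * Z).trace + (1 / 2) * S.trace : ℝ) : EReal) := by
  rw [← conjTranspose_eq_transpose_of_trivial]
  refine le_antisymm (le_iInf₂ fun S hS => ?_) (le_iInf fun W => ?_)
  · obtain ⟨W, hW⟩ := exists_nucNorm_add_le_of_sub_posSemidef Z hσ hS.2
    exact iInf_le_of_le W (EReal.coe_le_coe hW)
  · refine EReal.le_of_forall_lt_iff_le.1 fun z hz => ?_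
    obtain ⟨S, hS, hSσ, hle⟩ :=
      exists_sub_posSemidef_le_nucNorm_add Z W hσ (sub_pos.2 (EReal.coe_lt_coe_iff.1 hz))
    exact iInf₂_le_of_le S ⟨hS, hSσ⟩ (EReal.coe_le_coe (by linarith))
end
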